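/- arXiv:2410.22494 — 6 statements merged into one kernel-verified Lean document; each statement's English description precedes it below -/
import Mathlib

section
/- Let 𝒞 be a category with chosen binary products. Let f : A ⟶ B be a morphism and let G : B ⨯ Z ⟶ B ⨯ Y be a morphism satisfying G ≫ π₁ = π₁ (where π₁ denotes the first projection). Then the square with apex A ⨯ Z, left leg ⟨π₁, (f ⨯ 1_Z) ≫ G ≫ π₂⟩ : A ⨯ Z ⟶ A ⨯ Y, top leg f ⨯ 1_Z : A ⨯ Z ⟶ B ⨯ Z, over the cospan f ⨯ 1_Y : A ⨯ Y ⟶ B ⨯ Y and G : B ⨯ Z ⟶ B ⨯ Y, is a pullback square; that is, (A ⨯ Z, ⟨π₁, (f ⨯ 1_Z) ≫ G ≫ π₂⟩, f ⨯ 1_Z) is a pullback of the diagram A ⨯ Y ⟶^{f ⨯ 1_Y} B ⨯ Y ⟵^{G} B ⨯ Z. -/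
open CategoryTheory CategoryTheory.Limits

/-- In a category with chosen binary products, given `f : A ⟶ B` and
`G : B ⨯ Z ⟶ B ⨯ Y` with `G ≫ π₁ = π₁`, the square with apex `A ⨯ Z`, left leg
`⟨π₁, (f ⨯ 1_Z) ≫ G ≫ π₂⟩` and top leg `f ⨯ 1_Z`, over the cospan
`f ⨯ 1_Y : A ⨯ Y ⟶ B ⨯ Y` and `G : B ⨯ Z ⟶ B ⨯ Y`, is a pullback square. -/
theorem stmt0 {𝒞 : Type*} [Category 𝒞] [HasBinaryProducts 𝒞]
    {A B Y Z : 𝒞} (f : A ⟶ B) (G : B ⨯ Z ⟶ B ⨯ Y)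
    (hG : G ≫ prod.fst = prod.fst) :
    IsPullback
      (prod.lift prod.fst (prod.map f (𝟙 Z) ≫ G ≫ prod.snd) : A ⨯ Z ⟶ A ⨯ Y)
      (prod.map f (𝟙 Z))
      (prod.map f (𝟙 Y))
      G := by
  have comm : prod.lift prod.fst (prod.map f (𝟙 Z) ≫ G ≫ prod.snd) ≫ prod.map f (𝟙 Y) =
      prod.map f (𝟙 Z) ≫ G := by
    ext <;> simp [hG, prod.lift_fst, prod.lift_snd]
  -- Paste with the pullback square of `f ⨯ 𝟙 Y` along `π₁`: since both the left leg and `G`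
  -- commute with `π₁`, the outer rectangle is the pullback square of `f ⨯ 𝟙 Z` along `π₁`.
  refine IsPullback.of_right ?_ comm (IsPullback.of_prod_fst_with_id f Y)
  rw [prod.lift_fst, hG]
  exact IsPullback.of_prod_fst_with_id f Z
end

section
/- Let L be a category, and let f : A ⟶ B, g : B ⟶ C, q : β ⟶ B, r : γ ⟶ C be morphisms. Suppose: (i) (P₁, p₁ : P₁ ⟶ A, f̄ : P₁ ⟶ β) is a pullback of the cospan A ⟶^{f} B ⟵^{q} β (so p₁ ≫ f = f̄ ≫ q and the square is a pullback); (ii) (P₂, p₂ : P₂ ⟶ B, ḡ : P₂ ⟶ γ) is a pullback of the cospan B ⟶^{g} C ⟵^{r} γ; (iii) G : P₂ ⟶ β is a morphism satisfying G ≫ q = p₂; (iv) (Q, u : Q ⟶ P₁, v : Q ⟶ P₂) is a pullback of the cospan P₁ ⟶^{f̄} β ⟵^{G} P₂. Then (Q, u ≫ p₁ : Q ⟶ A, v ≫ ḡ : Q ⟶ γ) is a pullback of the cospan A ⟶^{f ≫ g} C ⟵^{r} γ. (This is the key step showing that composition of lenses is well defined, i.e., that the category Lens(L) of lenses over a category L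 with pullbacks is a well-defined category.) -/
open CategoryTheory

/-- the key pasting-style lemma showing that composition of lenses over a
category `L` with pullbacks is well defined. -/
theorem stmt1 {L : Type*} [Category L]
    {A B C β γ P₁ P₂ Q : L}
    (f : A ⟶ B) (g : B ⟶ C) (q : β ⟶ B) (r : γ ⟶ C)
    (p₁ : P₁ ⟶ A) (fbar : P₁ ⟶ β) (h₁ : IsPullback p₁ fbar f q)
    (p₂ : P₂ ⟶ B) (gbar : P₂ ⟶ γ) (h₂ : IsPullback p₂ gbar g r)
    (G : P₂ ⟶ β) (hG : G ≫ q = p₂)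
    (u : Q ⟶ P₁) (v : Q ⟶ P₂) (h₃ : IsPullback u v fbar G) :
    IsPullback (u ≫ p₁) (v ≫ gbar) (f ≫ g) r := by
  have hQ : IsPullback (u ≫ p₁) v f (G ≫ q) := h₃.paste_horiz h₁
  rw [hG] at hQ
  exact hQ.paste_vert h₂
end

section
/- Let 𝒞 be a category with chosen binary products. The following data form a category EDial(𝒞): objects are pairs (A, X) of objects of 𝒞; a morphism (A, X) ⟶ (B, Y) is a pair (f, F) with f : A ⟶ B and F : A ⨯ Y ⟶ X in 𝒞; the identity on (A, X) is (1_A, π₂ : A ⨯ X ⟶ X); the composite of (f, F) : (A, X) ⟶ (B, Y) and (g, G) : (B, Y) ⟶ (C, Z) is (f ≫ g, ⟨π₁, (f ⨯ 1_Z) ≫ G⟩ ≫ F). In particular this composition is associative and unital. -/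
open CategoryTheory CategoryTheory.Limits

/-- Objects of the category `EDial(𝒞)`: pairs of objects of `𝒞`. -/
structure EDialObj (𝒞 : Type*) where
  A : 𝒞
  X : 𝒞

/-- Morphisms of `EDial(𝒞)`: a morphism `(A, X) ⟶ (B, Y)` is a pair `(f, F)` with
`f : A ⟶ B` and `F : A ⨯ Y ⟶ X`. -/
def EDialHom {𝒞 : Type*} [Category 𝒞] [HasBinaryProducts 𝒞]
    (P Q : EDialObj 𝒞) : Type _ :=
  (P.A ⟶ Q.A) × (P.A ⨯ Q.X ⟶ P.X)

/-- The identity on `(A, X)` is `(1_A, π₂)`. -/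
noncomputable def EDialId {𝒞 : Type*} [Category 𝒞] [HasBinaryProducts 𝒞]
    (P : EDialObj 𝒞) : EDialHom P P :=
  (𝟙 P.A, prod.snd)

/-- The composite of `(f, F) : (A, X) ⟶ (B, Y)` and `(g, G) : (B, Y) ⟶ (C, Z)` is
`(f ≫ g, ⟨π₁, (f ⨯ 1_Z) ≫ G⟩ ≫ F)`. -/
noncomputable def EDialComp {𝒞 : Type*} [Category 𝒞] [HasBinaryProducts 𝒞]
    {P Q R : EDialObj 𝒞} (φ : EDialHom P Q) (ψ : EDialHom Q R) : EDialHom P R :=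
  (φ.1 ≫ ψ.1, prod.lift prod.fst (prod.map φ.1 (𝟙 R.X) ≫ ψ.2) ≫ φ.2)

/-! The second component of a composite is `F` precomposed with
`⟨π₁, (f ⨯ 1) ≫ G⟩ : A ⨯ Z ⟶ A ⨯ Y`. Associativity comes down to the naturality of this
construction in `f`: `⟨π₁, ((f ≫ g) ⨯ 1) ≫ H⟩ ≫ (f ⨯ 1) = (f ⨯ 1) ≫ ⟨π₁, (g ⨯ 1) ≫ H⟩`,
both sides being `⟨π₁ ≫ f, ((f ≫ g) ⨯ 1) ≫ H⟩`. -/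

namespace CategoryTheory.Limits.prod

variable {𝒞 : Type*} [Category 𝒞] [HasBinaryProducts 𝒞] {A B C X Y Z : 𝒞}

theorem lift_fst_map_id_comp_snd (F : A ⨯ Y ⟶ X) :
    lift fst (map (𝟙 A) (𝟙 Y) ≫ F) ≫ snd = F := by
  rw [lift_snd, map_id_id, Category.id_comp]

theorem lift_fst_map_comp_snd (f : A ⟶ B) :
    lift fst (map f (𝟙 Y) ≫ snd) = 𝟙 (A ⨯ Y) := by
  ext <;> simp

theorem lift_fst_map_comp_comp_map (f : A ⟶ B) (g : B ⟶ C) (H : C ⨯ Z ⟶ Y) :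
    lift fst (map (f ≫ g) (𝟙 Z) ≫ H) ≫ map f (𝟙 Y) =
      map f (𝟙 Z) ≫ lift fst (map g (𝟙 Z) ≫ H) := by
  ext <;> simp

theorem lift_fst_map_comp_comp_lift_fst_map (f : A ⟶ B) (g : B ⟶ C) (G : B ⨯ Y ⟶ X)
    (H : C ⨯ Z ⟶ Y) :
    lift fst (map (f ≫ g) (𝟙 Z) ≫ H) ≫ lift fst (map f (𝟙 Y) ≫ G) =
      lift fst (map f (𝟙 Z) ≫ lift fst (map g (𝟙 Z) ≫ H) ≫ G) := by
  ext
  · simp only [Category.assoc, lift_fst]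
  · simp only [Category.assoc, lift_snd]
    rw [← Category.assoc, lift_fst_map_comp_comp_map, Category.assoc]

end CategoryTheory.Limits.prod

/-- these data form a category `EDial(𝒞)`: the composition is
unital and associative. -/
theorem stmt3 {𝒞 : Type*} [Category 𝒞] [HasBinaryProducts 𝒞] :
    (∀ (P Q : EDialObj 𝒞) (φ : EDialHom P Q), EDialComp (EDialId P) φ = φ) ∧
    (∀ (P Q : EDialObj 𝒞) (φ : EDialHom P Q), EDialComp φ (EDialId Q) = φ) ∧
    (∀ (P Q R S : EDialObj 𝒞) (φ : EDialHom P Q) (ψ : EDialHom Q R) (χ : EDialHom R S),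
      EDialComp (EDialComp φ ψ) χ = EDialComp φ (EDialComp ψ χ)) := by
  refine ⟨fun P Q φ => ?_, fun P Q φ => ?_, fun P Q R S φ ψ χ => ?_⟩
  · exact Prod.ext (Category.id_comp _) (prod.lift_fst_map_id_comp_snd _)
  · refine Prod.ext (Category.comp_id _) ?_
    simp only [EDialComp, EDialId, prod.lift_fst_map_comp_snd, Category.id_comp]
  · refine Prod.ext (Category.assoc _ _ _) ?_
    simp only [EDialComp, ← prod.lift_fst_map_comp_comp_lift_fst_map, Category.assoc]
end

section
/- Let 𝒞 be a category with chosen binary products. The following data form a category ELens(𝒞): objects are pairs (A, X) of objects of 𝒞; a morphism (A, X) ⟶ (B, Y) is a pair (f, F) with f : A ⟶ B and F : A ⨯ Y ⟶ A ⨯ X in 𝒞 such that F ≫ π₁ = π₁; the identity on (A, X) is (1_A, 1_{A ⨯ X}); the composite of (f, F) : (A, X) ⟶ (B, Y) and (g, G) : (B, Y) ⟶ (C, Z) is (f ≫ g, ⟨π₁, (f ⨯ 1_Z) ≫ G ≫ π₂⟩ ≫ F). In particular the second component of a composite again satisfies the condition (⟨π₁, (f ⨯ 1_Z) ≫ G ≫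 π₂⟩ ≫ F) ≫ π₁ = π₁, and composition is associative and unital. -/
open CategoryTheory CategoryTheory.Limits

/-- Objects of the category `ELens(𝒞)`: pairs of objects of `𝒞` (standing for the
trivial bundles `π₁ : A ⨯ X ⟶ A`). -/
structure ELensObj (𝒞 : Type*) where
  A : 𝒞
  X : 𝒞

/-- Morphisms of `ELens(𝒞)`: a morphism `(A, X) ⟶ (B, Y)` is a pair `(f, F)` with
`f : A ⟶ B` and `F : A ⨯ Y ⟶ A ⨯ X` such that `F ≫ π₁ = π₁`. -/
structure ELensHom {𝒞 : Type*} [Category 𝒞] [HasBinaryProducts 𝒞]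
    (P Q : ELensObj 𝒞) where
  f : P.A ⟶ Q.A
  F : P.A ⨯ Q.X ⟶ P.A ⨯ P.X
  cond : F ≫ prod.fst = prod.fst

/-- The identity on `(A, X)` is `(1_A, 1_{A ⨯ X})`. -/
noncomputable def ELensId {𝒞 : Type*} [Category 𝒞] [HasBinaryProducts 𝒞]
    (P : ELensObj 𝒞) : ELensHom P P where
  f := 𝟙 P.A
  F := 𝟙 (P.A ⨯ P.X)
  cond := by simp

/-- The composite of `(f, F) : (A, X) ⟶ (B, Y)` and `(g, G) : (B, Y) ⟶ (C, Z)` is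
`(f ≫ g, ⟨π₁, (f ⨯ 1_Z) ≫ G ≫ π₂⟩ ≫ F)`. -/
noncomputable def ELensComp {𝒞 : Type*} [Category 𝒞] [HasBinaryProducts 𝒞]
    {P Q R : ELensObj 𝒞} (φ : ELensHom P Q) (ψ : ELensHom Q R) : ELensHom P R where
  f := φ.f ≫ ψ.f
  F := prod.lift prod.fst (prod.map φ.f (𝟙 R.X) ≫ ψ.F ≫ prod.snd) ≫ φ.F
  cond := by rw [Category.assoc, φ.cond, prod.lift_fst]

/-! The second component of a composite lens is `baseChange φ.f ψ.F ≫ φ.F`, where `baseChange f G`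
pulls a map `G` of trivial bundles over `B` back along `f : A ⟶ B`. Base change is functorial both in
`G` (for maps over `B`) and in `f`, which gives associativity; the unit laws say that base change
along `𝟙` and of `𝟙` are trivial. -/

namespace ELens

variable {𝒞 : Type*} [Category 𝒞] [HasBinaryProducts 𝒞] {A B C X Y Z : 𝒞}

noncomputable def baseChange (f : A ⟶ B) (G : B ⨯ Y ⟶ B ⨯ X) : A ⨯ Y ⟶ A ⨯ X :=
  prod.lift prod.fst (prod.map f (𝟙 Y) ≫ G ≫ prod.snd)

@[simp]
theorem baseChange_fst (f : A ⟶ B) (G : B ⨯ Y ⟶ B ⨯ X) :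
    baseChange f G ≫ prod.fst = prod.fst :=
  prod.lift_fst _ _

@[simp]
theorem baseChange_snd (f : A ⟶ B) (G : B ⨯ Y ⟶ B ⨯ X) :
    baseChange f G ≫ prod.snd = prod.map f (𝟙 Y) ≫ G ≫ prod.snd :=
  prod.lift_snd _ _

theorem baseChange_comp_map {f : A ⟶ B} {G : B ⨯ Y ⟶ B ⨯ X} (hG : G ≫ prod.fst = prod.fst) :
    baseChange f G ≫ prod.map f (𝟙 X) = prod.map f (𝟙 Y) ≫ G := by
  apply prod.hom_ext <;> simp [reassoc_of% baseChange_fst, hG]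

theorem baseChange_comp (f : A ⟶ B) {K : B ⨯ Z ⟶ B ⨯ Y} (G : B ⨯ Y ⟶ B ⨯ X)
    (hK : K ≫ prod.fst = prod.fst) :
    baseChange f K ≫ baseChange f G = baseChange f (K ≫ G) := by
  apply prod.hom_ext
  · simp
  · simp [reassoc_of% (baseChange_comp_map hK)]

theorem baseChange_baseChange (f : A ⟶ B) (g : B ⟶ C) (H : C ⨯ Z ⟶ C ⨯ X) :
    baseChange f (baseChange g H) = baseChange (f ≫ g) H := by
  apply prod.hom_ext <;> simp

theorem baseChange_id_left {G : A ⨯ Y ⟶ A ⨯ X} (hG : G ≫ prod.fst = prod.fst) :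
    baseChange (𝟙 A) G = G := by
  apply prod.hom_ext <;> simp [hG]

theorem baseChange_id_right (f : A ⟶ B) : baseChange f (𝟙 (B ⨯ X)) = 𝟙 (A ⨯ X) := by
  apply prod.hom_ext <;> simp

end ELens

open ELens

section

variable {𝒞 : Type*} [Category 𝒞] [HasBinaryProducts 𝒞] {P Q R : ELensObj 𝒞}

theorem ELensHom.ext {φ ψ : ELensHom P Q} (hf : φ.f = ψ.f) (hF : φ.F = ψ.F) : φ = ψ := by
  cases φ; cases ψ; congr

theorem ELensComp_f (φ : ELensHom P Q) (ψ : ELensHom Q R) : (ELensComp φ ψ).f = φ.f ≫ ψ.f :=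
  rfl

theorem ELensComp_F (φ : ELensHom P Q) (ψ : ELensHom Q R) :
    (ELensComp φ ψ).F = baseChange φ.f ψ.F ≫ φ.F :=
  rfl

end

/-- these data form a category `ELens(𝒞)`: the second component of a
composite again satisfies the lens condition, and the composition is unital and
associative. -/
theorem stmt4 {𝒞 : Type*} [Category 𝒞] [HasBinaryProducts 𝒞] :
    (∀ (P Q R : ELensObj 𝒞) (φ : ELensHom P Q) (ψ : ELensHom Q R),
      (prod.lift prod.fst (prod.map φ.f (𝟙 R.X) ≫ ψ.F ≫ prod.snd) ≫ φ.F) ≫ prod.fst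
        = prod.fst) ∧
    (∀ (P Q : ELensObj 𝒞) (φ : ELensHom P Q), ELensComp (ELensId P) φ = φ) ∧
    (∀ (P Q : ELensObj 𝒞) (φ : ELensHom P Q), ELensComp φ (ELensId Q) = φ) ∧
    (∀ (P Q R S : ELensObj 𝒞) (φ : ELensHom P Q) (ψ : ELensHom Q R) (χ : ELensHom R S),
      ELensComp (ELensComp φ ψ) χ = ELensComp φ (ELensComp ψ χ)) := by
  refine ⟨fun P Q R φ ψ => (ELensComp φ ψ).cond, ?_, ?_, ?_⟩
  · intro P Q φ
    refine ELensHom.ext (Category.id_comp _) ?_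
    show baseChange (𝟙 P.A) φ.F ≫ 𝟙 _ = φ.F
    rw [baseChange_id_left φ.cond, Category.comp_id]
  · intro P Q φ
    refine ELensHom.ext (Category.comp_id _) ?_
    show baseChange φ.f (𝟙 _) ≫ φ.F = φ.F
    rw [baseChange_id_right, Category.id_comp]
  · intro P Q R S φ ψ χ
    refine ELensHom.ext (Category.assoc _ _ _) ?_
    rw [ELensComp_F, ELensComp_F, ELensComp_F, ELensComp_F, ELensComp_f,
      ← baseChange_comp _ _ (baseChange_fst _ _), baseChange_baseChange, Category.assoc]
end

section
/- Let 𝒞 be a category with chosen binary products. The assignment sending an object (A, X) of ELens(𝒞) to the object (A, X) of EDial(𝒞), and sending a morphism (f, F) of ELens(𝒞) (with F : A ⨯ Y ⟶ A ⨯ X satisfying F ≫ π₁ = π₁) to the morphism (f, F ≫ π₂) of EDial(𝒞), is a functor G which is an isomorphism of categories between ELens(𝒞) and EDial(𝒞); its inverse G⁻¹ is the identity on objects and sends a morphism (f, F) of EDial(𝒞) (with F : A ⨯ Y ⟶ X) to the morphism (f, ⟨π₁, F⟩) of ELens(𝒞). -/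
open CategoryTheory CategoryTheory.Limits

section

variable {𝒞 : Type*} [Category 𝒞] [HasBinaryProducts 𝒞]

theorem prod_lift_fst_comp_lift_fst {A X Y Z : 𝒞} (u : A ⨯ Z ⟶ Y) (F : A ⨯ Y ⟶ X) :
    prod.lift prod.fst u ≫ prod.lift prod.fst F
      = prod.lift prod.fst (prod.lift prod.fst u ≫ F) := by
  rw [prod.comp_lift, prod.lift_fst]

theorem prod_lift_fst_comp_snd_eq {A X Y : 𝒞} {F : A ⨯ Y ⟶ A ⨯ X}
    (hF : F ≫ prod.fst = prod.fst) : prod.lift prod.fst (F ≫ prod.snd) = F :=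
  prod.hom_ext (by rw [prod.lift_fst, hF]) (prod.lift_snd _ _)

end

/-- the assignment `(A, X) ↦ (A, X)`, `(f, F) ↦ (f, F ≫ π₂)` is a functor
`G : ELens(𝒞) ⟶ EDial(𝒞)` which is an isomorphism of categories, with inverse
`G⁻¹` the identity on objects and `(f, F) ↦ (f, ⟨π₁, F⟩)` on morphisms.
Spelled out in terms of the explicit identities and composition formulas of the two
categories (first components being mapped identically): `G` preserves identities and
composition, `G⁻¹` lands in `ELens(𝒞)` (satisfies the lens condition), preserves
identities and composition, and `G` and `G⁻¹` are mutually inverse on morphisms. -/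
theorem stmt5 {𝒞 : Type*} [Category 𝒞] [HasBinaryProducts 𝒞] :
    -- G preserves identities: G(1_A, 1_{A ⨯ X}) = (1_A, π₂)
    (∀ (A X : 𝒞), (𝟙 (A ⨯ X)) ≫ (prod.snd : A ⨯ X ⟶ X) = prod.snd) ∧
    -- G preserves composition
    (∀ (A X B Y C Z : 𝒞) (f : A ⟶ B)
        (F : A ⨯ Y ⟶ A ⨯ X) (_ : F ≫ prod.fst = prod.fst)
        (g : B ⟶ C) (G : B ⨯ Z ⟶ B ⨯ Y) (_ : G ≫ prod.fst = prod.fst),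
      (prod.lift prod.fst (prod.map f (𝟙 Z) ≫ G ≫ prod.snd) ≫ F) ≫ prod.snd
        = prod.lift prod.fst (prod.map f (𝟙 Z) ≫ (G ≫ prod.snd)) ≫ (F ≫ prod.snd)) ∧
    -- G⁻¹ lands in ELens(𝒞): ⟨π₁, F⟩ satisfies the lens condition
    (∀ (A X Y : 𝒞) (F : A ⨯ Y ⟶ X),
      (prod.lift prod.fst F : A ⨯ Y ⟶ A ⨯ X) ≫ prod.fst = prod.fst) ∧
    -- G⁻¹ preserves identities: G⁻¹(1_A, π₂) = (1_A, 1_{A ⨯ X})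
    (∀ (A X : 𝒞), prod.lift prod.fst (prod.snd : A ⨯ X ⟶ X) = 𝟙 (A ⨯ X)) ∧
    -- G⁻¹ preserves composition
    (∀ (A X B Y C Z : 𝒞) (f : A ⟶ B) (F : A ⨯ Y ⟶ X) (g : B ⟶ C) (G : B ⨯ Z ⟶ Y),
      prod.lift prod.fst (prod.map f (𝟙 Z) ≫ prod.lift prod.fst G ≫ prod.snd)
          ≫ prod.lift prod.fst F
        = prod.lift prod.fst (prod.lift prod.fst (prod.map f (𝟙 Z) ≫ G) ≫ F)) ∧
    -- G ∘ G⁻¹ = id on morphisms of EDial(𝒞)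
    (∀ (A X Y : 𝒞) (F : A ⨯ Y ⟶ X),
      (prod.lift prod.fst F : A ⨯ Y ⟶ A ⨯ X) ≫ prod.snd = F) ∧
    -- G⁻¹ ∘ G = id on morphisms of ELens(𝒞)
    (∀ (A X Y : 𝒞) (F : A ⨯ Y ⟶ A ⨯ X) (_ : F ≫ prod.fst = prod.fst),
      prod.lift prod.fst (F ≫ prod.snd) = F) := by
  refine ⟨fun _ _ => Category.id_comp _, ?_, fun _ _ _ _ => prod.lift_fst _ _,
    fun _ _ => prod.lift_fst_snd, ?_, fun _ _ _ _ => prod.lift_snd _ _,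
    fun _ _ _ _ hF => prod_lift_fst_comp_snd_eq hF⟩
  · intros
    simp only [Category.assoc]
  · intros
    rw [prod.lift_snd, prod_lift_fst_comp_lift_fst]
end

section
/- The following data form a category Dial(Set), the Dialectica category over the category of sets: objects are triples (A, X, α) where A and X are sets (types) and α ⊆ A × X is a relation; a morphism (A, X, α) ⟶ (B, Y, β) is a pair of functions (f : A → B, F : A × Y → X) such that for all a ∈ A and y ∈ Y, if (a, F(a, y)) ∈ α then (f(a), y) ∈ β; the identity on (A, X, α) is (id_A, (a, x) ↦ x); the composite of (f, F) : (A, X, α) ⟶ (B, Y, β) and (g, G) : (B, Y, β) ⟶ (C, Z, γ) is (g ∘ f, (a, z) ↦ F(a, G(f(a), z))). In particular the identities satisfy the morphism condition, composition preserves the morphism condition, and composition is associative and unital. -/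
universe u

/-- Objects of the Dialectica category over `Set`: triples `(A, X, α)` with
`α` a relation between `A` and `X` (a subset of `A × X`). -/
structure DialObj : Type (u + 1) where
  A : Type u
  X : Type u
  rel : A → X → Prop

/-- Morphisms of the Dialectica category over `Set`: pairs `(f, F)` such that
`(a, F(a, y)) ∈ α` implies `(f(a), y) ∈ β`. -/
structure DialHom (P Q : DialObj.{u}) : Type u where
  f : P.A → Q.A
  F : P.A × Q.X → P.X
  cond : ∀ (a : P.A) (y : Q.X), P.rel a (F (a, y)) → Q.rel (f a) y

/-- The identity on `(A, X, α)` is `(id_A, (a, x) ↦ x)`. -/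
def DialId (P : DialObj.{u}) : DialHom P P where
  f := id
  F := fun p => p.2
  cond := fun _ _ h => h

/-- The composite of `(f, F) : (A, X, α) ⟶ (B, Y, β)` and `(g, G) : (B, Y, β) ⟶ (C, Z, γ)`
is `(g ∘ f, (a, z) ↦ F(a, G(f(a), z)))`. -/
def DialComp {P Q R : DialObj.{u}} (φ : DialHom P Q) (ψ : DialHom Q R) : DialHom P R where
  f := ψ.f ∘ φ.f
  F := fun p => φ.F (p.1, ψ.F (φ.f p.1, p.2))
  cond := fun a z h => ψ.cond _ z (φ.cond a _ h)

/- The category laws hold definitionally: both components compose as functions do, and the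
`cond` fields agree by proof irrelevance. -/
section

variable {P Q R S : DialObj.{u}}

theorem dialId_comp (φ : DialHom P Q) : DialComp (DialId P) φ = φ := rfl

theorem comp_dialId (φ : DialHom P Q) : DialComp φ (DialId Q) = φ := rfl

theorem dialComp_assoc (φ : DialHom P Q) (ψ : DialHom Q R) (χ : DialHom R S) :
    DialComp (DialComp φ ψ) χ = DialComp φ (DialComp ψ χ) := rfl

end

/-- these data form a category `Dial(Set)`: the identities satisfy the
morphism condition, composition preserves the morphism condition, and composition is
unital and associative. -/
theorem stmt7 :
    -- the identity satisfies the morphism condition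
    (∀ (P : DialObj.{u}) (a : P.A) (x : P.X),
      P.rel a ((fun p : P.A × P.X => p.2) (a, x)) → P.rel (id a) x) ∧
    -- composition preserves the morphism condition
    (∀ (P Q R : DialObj.{u}) (φ : DialHom P Q) (ψ : DialHom Q R) (a : P.A) (z : R.X),
      P.rel a (φ.F (a, ψ.F (φ.f a, z))) → R.rel (ψ.f (φ.f a)) z) ∧
    -- left unitality
    (∀ (P Q : DialObj.{u}) (φ : DialHom P Q), DialComp (DialId P) φ = φ) ∧
    -- right unitality
    (∀ (P Q : DialObj.{u}) (φ : DialHom P Q), DialComp φ (DialId Q) = φ) ∧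
    -- associativity
    (∀ (P Q R S : DialObj.{u}) (φ : DialHom P Q) (ψ : DialHom Q R) (χ : DialHom R S),
      DialComp (DialComp φ ψ) χ = DialComp φ (DialComp ψ χ)) :=
  ⟨fun P => (DialId P).cond, fun _ _ _ φ ψ => (DialComp φ ψ).cond,
    fun _ _ => dialId_comp, fun _ _ => comp_dialId, fun _ _ _ _ => dialComp_assoc⟩
end
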